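/- Let H be a connected graph and let H' be obtained from H by adding six new vertices x, u_1, v_1, x_1, u_1', v_1' together with the following new edges: a u_1, u_1 x, x v_1, v_1 b, where a and b are distinct vertices of H; an edge e_0 joining x to a vertex of H; an edge e_0' joining x_1 to a vertex of H; and the edges a' u_1', u_1' x_1, x_1 v_1', v_1' b', where a' and b' are distinct vertices of H. Then rc(H') ≤ rc(H) + 3. -/

import Mathlib

/-!
A rainbow colouring of `H` with `k` colours extends to `H'` with three more colours: a new
vertex reaches `H` by its edge into `H` and then follows a rainbow path of `H`; two new vertices
in different arms do this at both ends, and two in the same arm are joined inside the arm.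

Conversely a rainbow colouring of `H'` yields one of `H` with finitely many colours, which matters
when `H` is infinite and `rc H = sInf ∅ = 0`: each excursion of a rainbow path of `H'` outside `H`
is replaced by a fixed walk of `H` between the finitely many attachment vertices, and the edges of
these walks get fresh colours.
-/

open SimpleGraph

/-- The rainbow connection number of a graph `G`: the least `k` such that the edges of `G`
can be coloured with colours `0, …, k-1` so that any two distinct vertices are joined by a
path whose edges receive pairwise distinct colours. -/
noncomputable def rc {V : Type*} (G : SimpleGraph V) : ℕ :=
  sInf {k : ℕ | ∃ c : Sym2 V → ℕ, (∀ e ∈ G.edgeSet, c e < k) ∧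
    ∀ u v : V, u ≠ v → ∃ p : G.Walk u v, p.IsPath ∧ (p.edges.map c).Nodup}

open Sum

theorem injOn_ite_idxOf {α : Type*} [DecidableEq α] (L : List α) (k : ℕ) {f : α → ℕ}
    {s : Set α} (hf : Set.InjOn f (s \ {e | e ∈ L})) (hlt : ∀ e ∈ s, e ∉ L → f e < k) :
    Set.InjOn (fun e => if e ∈ L then k + L.idxOf e else f e) s := by
  intro e₁ h₁ e₂ h₂ h
  by_cases m₁ : e₁ ∈ L <;> by_cases m₂ : e₂ ∈ L <;> simp only [m₁, m₂, if_true, if_false] at h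
  · exact (List.idxOf_inj m₁).1 (by omega)
  · have := hlt e₂ h₂ m₂; omega
  · have := hlt e₁ h₁ m₁; omega
  · exact hf ⟨h₁, m₁⟩ ⟨h₂, m₂⟩ h

namespace SimpleGraph

variable {V W : Type*} {G : SimpleGraph V}

def RainbowJoined (G : SimpleGraph V) (col : Sym2 V → ℕ) (u v : V) : Prop :=
  ∃ p : G.Walk u v, p.IsPath ∧ (p.edges.map col).Nodup

def IsRainbowColoring (G : SimpleGraph V) (col : Sym2 V → ℕ) (k : ℕ) : Prop :=
  (∀ e ∈ G.edgeSet, col e < k) ∧ ∀ u v, u ≠ v → G.RainbowJoined col u v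

theorem RainbowJoined.symm {col : Sym2 V → ℕ} {u v : V} (h : G.RainbowJoined col u v) :
    G.RainbowJoined col v u := by
  obtain ⟨p, hp, hn⟩ := h
  exact ⟨p.reverse, hp.reverse, by simpa [Walk.edges_reverse, List.map_reverse] using hn⟩

theorem rainbowJoined_of_injOn {col : Sym2 V → ℕ} {u v : V} (w : G.Walk u v)
    (h : Set.InjOn col {e | e ∈ w.edges}) : G.RainbowJoined col u v := by
  classical
  exact ⟨w.bypass, w.bypass_isPath, w.bypass_isPath.edges_nodup.map_on
    fun _ h₁ _ h₂ => h (w.edges_bypass_subset_edges h₁) (w.edges_bypass_subset_edges h₂)⟩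

theorem rainbowJoined_of_nodup_map {col : Sym2 V → ℕ} {u v : V} (w : G.Walk u v)
    (h : (w.edges.map col).Nodup) : G.RainbowJoined col u v :=
  rainbowJoined_of_injOn w fun _ h₁ _ h₂ => List.inj_on_of_nodup_map h h₁ h₂

theorem rainbowJoined_of_adj (col : Sym2 V → ℕ) {u v : V} (h : G.Adj u v) :
    G.RainbowJoined col u v :=
  ⟨h.toWalk, by simp [h.ne], by simp⟩

theorem rainbowJoined_of_adj_of_adj {col : Sym2 V → ℕ} {u v w : V} (huv : G.Adj u v)
    (hvw : G.Adj v w) (huw : u ≠ w) (hcol : col s(u, v) ≠ col s(v, w)) :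
    G.RainbowJoined col u w :=
  ⟨.cons huv hvw.toWalk, by simp [Walk.isPath_def, huv.ne, hvw.ne, huw], by simp [hcol]⟩

theorem rc_le_rc_add {G' : SimpleGraph W} (d : ℕ)
    (hext : ∀ k col, G.IsRainbowColoring col k → ∃ col', G'.IsRainbowColoring col' (k + d))
    (hrestr : ∀ k col, G'.IsRainbowColoring col k → ∃ m col', G.IsRainbowColoring col' m) :
    rc G' ≤ rc G + d := by
  obtain hG' | ⟨k, col, hcol⟩ :=
    Set.eq_empty_or_nonempty {k | ∃ col, G'.IsRainbowColoring col k}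
  · show sInf {k | ∃ col, G'.IsRainbowColoring col k} ≤ _
    rw [hG', Nat.sInf_empty]
    exact Nat.zero_le _
  · obtain ⟨m, colG, hG⟩ := hrestr k col hcol
    obtain ⟨colMin, hMin⟩ :=
      Nat.sInf_mem (s := {m | ∃ col, G.IsRainbowColoring col m}) ⟨m, colG, hG⟩
    obtain ⟨col', h'⟩ := hext _ colMin hMin
    exact Nat.sInf_le ⟨col', h'⟩

theorem Connected.exists_list_edges_joining (hG : G.Connected) (S : List V) :
    ∃ L : List (Sym2 V), ∀ s ∈ S, ∀ t ∈ S, ∃ r : G.Walk s t, ∀ e ∈ r.edges, e ∈ L := by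
  let w : ∀ s t, G.Walk s t := fun s t => (hG.preconnected s t).some
  exact ⟨S.flatMap fun s => S.flatMap fun t => (w s t).edges, fun s hs t ht =>
    ⟨w s t, fun _ he => List.mem_flatMap.2 ⟨s, hs, List.mem_flatMap.2 ⟨t, ht, he⟩⟩⟩⟩

section Sum

variable {ι : Type*} {H : SimpleGraph V} {G' : SimpleGraph (V ⊕ ι)}
    {col : Sym2 (V ⊕ ι) → ℕ} {k : ℕ}

/-- A walk starting outside `V` may be projected from any vertex `u` of `S`. -/
theorem exists_walk_of_walk_inl {S : Set V} {L : Set (Sym2 V)}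
    (hinl : ∀ p q, G'.Adj (inl p) (inl q) → H.Adj p q)
    (hmix : ∀ p i, G'.Adj (inl p) (inr i) → p ∈ S)
    (hL : ∀ s ∈ S, ∀ t ∈ S, ∃ r : H.Walk s t, ∀ e ∈ r.edges, e ∈ L) :
    ∀ {y : V ⊕ ι} {v : V} (p : G'.Walk y (inl v)) (u : V), (y = inl u ∨ y.isRight ∧ u ∈ S) →
      ∃ r : H.Walk u v, ∀ e ∈ r.edges, Sym2.map inl e ∈ p.edges ∨ e ∈ L
  | _, _, .nil, u, hu => by
    obtain rfl : _ = u := by simpa using hu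
    exact ⟨.nil, by simp⟩
  | inl x, _, .cons (v := inl w) h q, u, hu => by
    obtain rfl : x = u := by simpa using hu
    obtain ⟨r, hr⟩ := exists_walk_of_walk_inl hinl hmix hL q w (.inl rfl)
    refine ⟨.cons (hinl _ _ h) r, fun e he => ?_⟩
    obtain rfl | he := List.mem_cons.1 he
    · simp
    · exact (hr e he).imp_left (List.mem_cons_of_mem _)
  | inl x, _, .cons (v := inr j) h q, u, hu => by
    obtain rfl : x = u := by simpa using hu
    obtain ⟨r, hr⟩ := exists_walk_of_walk_inl hinl hmix hL q x (.inr ⟨rfl, hmix x j h⟩)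
    exact ⟨r, fun e he => (hr e he).imp_left (List.mem_cons_of_mem _)⟩
  | inr i, _, .cons (v := inl w) h q, u, hu => by
    have hu : u ∈ S := by simpa using hu
    obtain ⟨r₀, hr₀⟩ := hL u hu w (hmix w i h.symm)
    obtain ⟨r, hr⟩ := exists_walk_of_walk_inl hinl hmix hL q w (.inl rfl)
    refine ⟨r₀.append r, fun e he => ?_⟩
    obtain he | he := List.mem_append.1 (Walk.edges_append _ _ ▸ he)
    · exact .inr (hr₀ e he)
    · exact (hr e he).imp_left (List.mem_cons_of_mem _)
  | inr i, _, .cons (v := inr j) h q, u, hu => by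
    obtain ⟨r, hr⟩ := exists_walk_of_walk_inl hinl hmix hL q u (.inr ⟨rfl, by simpa using hu⟩)
    exact ⟨r, fun e he => (hr e he).imp_left (List.mem_cons_of_mem _)⟩

theorem exists_isRainbowColoring_of_sum (hH : H.Connected) (S : List V)
    (hinl : ∀ p q, G'.Adj (inl p) (inl q) ↔ H.Adj p q)
    (hmix : ∀ p i, G'.Adj (inl p) (inr i) → p ∈ S)
    (hcol : G'.IsRainbowColoring col k) : ∃ m colH, H.IsRainbowColoring colH m := by
  classical
  obtain ⟨L, hL⟩ := hH.exists_list_edges_joining S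
  refine ⟨k + L.length, fun e => if e ∈ L then k + L.idxOf e else col (Sym2.map inl e), ?_, ?_⟩
  · intro e he
    by_cases heL : e ∈ L
    · simpa [heL] using List.idxOf_lt_length_iff.2 heL
    · have : Sym2.map inl e ∈ G'.edgeSet := by
        induction e using Sym2.ind with
        | _ x y => simpa [hinl] using he
      simpa [heL] using (hcol.1 _ this).trans_le (Nat.le_add_right k L.length)
  · intro u v huv
    obtain ⟨p, -, hp⟩ := hcol.2 (inl u) (inl v) (by simpa using huv)
    obtain ⟨r, hr⟩ := exists_walk_of_walk_inl (S := {x | x ∈ S}) (L := {e | e ∈ L})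
      (fun p q => (hinl p q).1) hmix hL p u (.inl rfl)
    refine rainbowJoined_of_injOn r (injOn_ite_idxOf L k ?_ ?_)
    · rintro e₁ ⟨h₁, m₁⟩ e₂ ⟨h₂, m₂⟩ h
      exact Sym2.map.injective inl_injective <|
        List.inj_on_of_nodup_map hp ((hr e₁ h₁).resolve_right m₁) ((hr e₂ h₂).resolve_right m₂) h
    · exact fun e he heL => hcol.1 _ (p.edges_subset_edgeSet ((hr e he).resolve_right heL))

theorem exists_walk_inl_of_isRainbowColoring (hhom : ∀ p q, H.Adj p q → G'.Adj (inl p) (inl q))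
    (hH : H.IsRainbowColoring (col ∘ Sym2.map inl) k) (u v : V) :
    ∃ p : G'.Walk (inl u) (inl v), (p.edges.map col).Nodup ∧ ∀ e ∈ p.edges, col e < k := by
  rcases eq_or_ne u v with rfl | huv
  · exact ⟨.nil, by simp, by simp⟩
  obtain ⟨q, -, hq⟩ := hH.2 u v huv
  let f : H →g G' := ⟨inl, hhom _ _⟩
  refine ⟨q.map f, by simpa [Walk.edges_map, f, Function.comp_def] using hq, ?_⟩
  simp only [Walk.edges_map, List.mem_map, forall_exists_index, and_imp, forall_apply_eq_imp_iff₂]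
  exact fun e he => hH.1 e (q.edges_subset_edgeSet he)

theorem rainbowJoined_inr_inl_of_adj (hhom : ∀ p q, H.Adj p q → G'.Adj (inl p) (inl q))
    (hH : H.IsRainbowColoring (col ∘ Sym2.map inl) k) {i : ι} {s : V}
    (hs : G'.Adj (inr i) (inl s)) (hk : k ≤ col s(inr i, inl s)) (v : V) :
    G'.RainbowJoined col (inr i) (inl v) := by
  obtain ⟨p, hp, hlt⟩ := exists_walk_inl_of_isRainbowColoring hhom hH s v
  refine rainbowJoined_of_nodup_map (.cons hs p) (List.nodup_cons.2 ⟨fun hmem => ?_, hp⟩)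
  obtain ⟨e, he, h⟩ := List.mem_map.1 hmem
  exact (hlt e he).not_ge (h ▸ hk)

theorem rainbowJoined_inr_inr_of_adj (hhom : ∀ p q, H.Adj p q → G'.Adj (inl p) (inl q))
    (hH : H.IsRainbowColoring (col ∘ Sym2.map inl) k) {i j : ι} {s t : V}
    (hs : G'.Adj (inr i) (inl s)) (ht : G'.Adj (inl t) (inr j))
    (hks : k ≤ col s(inr i, inl s)) (hkt : k ≤ col s(inl t, inr j))
    (hne : col s(inr i, inl s) ≠ col s(inl t, inr j)) :
    G'.RainbowJoined col (inr i) (inr j) := by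
  obtain ⟨p, hp, hlt⟩ := exists_walk_inl_of_isRainbowColoring hhom hH s t
  refine rainbowJoined_of_nodup_map (.cons hs (p.concat ht)) ?_
  rw [Walk.edges_cons, Walk.edges_concat, List.concat_eq_append, List.map_cons, List.map_append,
    List.map_singleton, List.nodup_cons, List.nodup_append]
  have hlow : ∀ n ∈ p.edges.map col, n < k := by
    simpa only [List.forall_mem_map] using hlt
  refine ⟨?_, hp, List.nodup_singleton _, ?_⟩
  · rw [List.mem_append, List.mem_singleton]
    rintro (h | h)
    · exact (hlow _ h).not_ge hks
    · exact hne h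
  · rintro n hn _ hm rfl
    exact (hlow n hn).not_ge (List.mem_singleton.1 hm ▸ hkt)

end Sum

end SimpleGraph

section Subcase13

variable {V : Type*}

/-- `x, u₁, v₁, x₁, u₁', v₁'` are `inr 0, …, inr 5`; `c` and `c'` are the ends of `e₀` and `e₀'`
in `H`. -/
def subcase13Graph (H : SimpleGraph V) (a b c a' b' c' : V) : SimpleGraph (V ⊕ Fin 6) :=
  SimpleGraph.fromRel (fun u v : V ⊕ Fin 6 =>
        (∃ p q, u = Sum.inl p ∧ v = Sum.inl q ∧ H.Adj p q) ∨
        (u = Sum.inl a ∧ v = Sum.inr 1) ∨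
        (u = Sum.inr 1 ∧ v = Sum.inr 0) ∨
        (u = Sum.inr 0 ∧ v = Sum.inr 2) ∨
        (u = Sum.inr 2 ∧ v = Sum.inl b) ∨
        (u = Sum.inr 0 ∧ v = Sum.inl c) ∨
        (u = Sum.inr 3 ∧ v = Sum.inl c') ∨
        (u = Sum.inl a' ∧ v = Sum.inr 4) ∨
        (u = Sum.inr 4 ∧ v = Sum.inr 3) ∨
        (u = Sum.inr 3 ∧ v = Sum.inr 5) ∨
        (u = Sum.inr 5 ∧ v = Sum.inl b'))

/-- The middle vertex `x` or `x₁` of the arm `u₁ x v₁` or `u₁' x₁ v₁'` containing `inr i`. -/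
def middle (i : Fin 6) : Fin 6 := ⟨3 * (i.val / 3), by omega⟩

/-- Arm `i / 3` uses colour `k + i / 3` on its edges to `H`, so that the two arms leave `H` with
different colours, and `k + 1`, `k + 2` on its inner edges `u x`, `x v`. -/
def gadgetColoring (k : ℕ) (colH : Sym2 V → ℕ) : Sym2 (V ⊕ Fin 6) → ℕ :=
  Sym2.lift ⟨fun x y => match x, y with
    | inl p, inl q => colH s(p, q)
    | inl _, inr i | inr i, inl _ => k + i.val / 3
    | inr i, inr j => k + i.val % 3 + j.val % 3, by
    rintro (p | i) (q | j)
    · exact congrArg colH Sym2.eq_swap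
    · rfl
    · rfl
    · exact add_right_comm _ _ _⟩

namespace subcase13Graph

variable {H : SimpleGraph V} {a b c a' b' c' : V}

theorem adj_inl_inl {p q : V} :
    (subcase13Graph H a b c a' b' c').Adj (inl p) (inl q) ↔ H.Adj p q := by
  simpa [subcase13Graph, H.adj_comm q p] using H.ne_of_adj

theorem mem_of_adj_inl_inr {p : V} {i : Fin 6}
    (h : (subcase13Graph H a b c a' b' c').Adj (inl p) (inr i)) :
    p ∈ [a, b, c, a', b', c'] := by
  simp only [subcase13Graph, fromRel_adj] at h
  aesop

theorem adj_inr_inr {i j : Fin 6} (h : (subcase13Graph H a b c a' b' c').Adj (inr i) (inr j)) :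
    i.val % 3 = 0 ∨ j.val % 3 = 0 := by
  simp only [subcase13Graph, fromRel_adj] at h
  aesop

theorem adj_anchor (i : Fin 6) :
    (subcase13Graph H a b c a' b' c').Adj (inr i) (inl (![c, a, b, c', a', b'] i)) := by
  fin_cases i <;> simp [subcase13Graph]

theorem adj_middle {i : Fin 6} (hi : i.val % 3 ≠ 0) :
    (subcase13Graph H a b c a' b' c').Adj (inr i) (inr (middle i)) := by
  fin_cases i <;> simp_all [subcase13Graph, middle]

variable {colH : Sym2 V → ℕ} {k : ℕ}

theorem gadgetColoring_comp_map_inl : gadgetColoring k colH ∘ Sym2.map inl = colH :=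
  funext <| Sym2.ind fun _ _ => rfl

theorem gadgetColoring_lt (hH : ∀ e ∈ H.edgeSet, colH e < k) :
    ∀ e ∈ (subcase13Graph H a b c a' b' c').edgeSet, gadgetColoring k colH e < k + 3 := by
  refine Sym2.ind fun x y he => ?_
  rw [mem_edgeSet] at he
  rcases x with p | i <;> rcases y with q | j
  · exact (hH s(p, q) (adj_inl_inl.1 he)).trans_le (Nat.le_add_right k 3)
  · show k + j.val / 3 < k + 3; omega
  · show k + i.val / 3 < k + 3; omega
  · show k + i.val % 3 + j.val % 3 < k + 3
    rcases adj_inr_inr he with h | h <;> omega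

theorem rainbowJoined_inr_inr (hH : H.IsRainbowColoring colH k) {i j : Fin 6} (hij : i ≠ j) :
    (subcase13Graph H a b c a' b' c').RainbowJoined (gadgetColoring k colH) (inr i) (inr j) := by
  have hval : i.val ≠ j.val := Fin.val_ne_of_ne hij
  by_cases harm : i.val / 3 = j.val / 3
  · by_cases hi : i.val % 3 = 0
    · obtain rfl : i = middle j := Fin.ext (by simp only [middle]; omega)
      exact rainbowJoined_of_adj _ (adj_middle (by omega)).symm
    by_cases hj : j.val % 3 = 0
    · obtain rfl : j = middle i := Fin.ext (by simp only [middle]; omega)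
      exact rainbowJoined_of_adj _ (adj_middle hi)
    have hm : middle i = middle j := Fin.ext (by simp only [middle, harm])
    refine rainbowJoined_of_adj_of_adj (adj_middle hi) (hm ▸ (adj_middle hj).symm)
      (by simpa using hij) ?_
    show k + i.val % 3 + (3 * (i.val / 3)) % 3 ≠ k + (3 * (i.val / 3)) % 3 + j.val % 3
    omega
  · exact rainbowJoined_inr_inr_of_adj (fun _ _ => adj_inl_inl.2)
      (by rwa [gadgetColoring_comp_map_inl]) (adj_anchor i) (adj_anchor j).symm
      (Nat.le_add_right _ _) (Nat.le_add_right _ _) (by show k + i.val / 3 ≠ k + j.val / 3; omega)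

theorem isRainbowColoring_gadgetColoring (hH : H.IsRainbowColoring colH k) :
    (subcase13Graph H a b c a' b' c').IsRainbowColoring (gadgetColoring k colH) (k + 3) := by
  have hhom : ∀ p q, H.Adj p q → (subcase13Graph H a b c a' b' c').Adj (inl p) (inl q) :=
    fun _ _ => adj_inl_inl.2
  have hH' : H.IsRainbowColoring (gadgetColoring k colH ∘ Sym2.map inl) k := by
    rwa [gadgetColoring_comp_map_inl]
  refine ⟨gadgetColoring_lt hH.1, ?_⟩
  rintro (u | i) (v | j) hne
  · obtain ⟨p, hp, -⟩ := exists_walk_inl_of_isRainbowColoring hhom hH' u v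
    exact rainbowJoined_of_nodup_map p hp
  · exact (rainbowJoined_inr_inl_of_adj hhom hH' (adj_anchor j) (Nat.le_add_right _ _) u).symm
  · exact rainbowJoined_inr_inl_of_adj hhom hH' (adj_anchor i) (Nat.le_add_right _ _) v
  · exact rainbowJoined_inr_inr hH (by simpa using hne)

end subcase13Graph

end Subcase13

theorem rc_subcase13_general {V : Type*} (H : SimpleGraph V) (hH : H.Connected)
    (a b c a' b' c' : V) :
    rc (SimpleGraph.fromRel (fun u v : V ⊕ Fin 6 =>
        (∃ p q, u = Sum.inl p ∧ v = Sum.inl q ∧ H.Adj p q) ∨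
        (u = Sum.inl a ∧ v = Sum.inr 1) ∨
        (u = Sum.inr 1 ∧ v = Sum.inr 0) ∨
        (u = Sum.inr 0 ∧ v = Sum.inr 2) ∨
        (u = Sum.inr 2 ∧ v = Sum.inl b) ∨
        (u = Sum.inr 0 ∧ v = Sum.inl c) ∨
        (u = Sum.inr 3 ∧ v = Sum.inl c') ∨
        (u = Sum.inl a' ∧ v = Sum.inr 4) ∨
        (u = Sum.inr 4 ∧ v = Sum.inr 3) ∨
        (u = Sum.inr 3 ∧ v = Sum.inr 5) ∨
        (u = Sum.inr 5 ∧ v = Sum.inl b'))) ≤ rc H + 3 := by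
  change rc (subcase13Graph H a b c a' b' c') ≤ rc H + 3
  refine rc_le_rc_add 3 (fun _ _ hcol => ⟨_, subcase13Graph.isRainbowColoring_gadgetColoring hcol⟩)
    fun _ _ hcol => exists_isRainbowColoring_of_sum hH [a, b, c, a', b', c']
      (fun _ _ => subcase13Graph.adj_inl_inl) (fun _ _ => subcase13Graph.mem_of_adj_inl_inr) hcol

/-- Subcase 1.3.  Add new vertices `x = Sum.inr 0`, `u₁ = Sum.inr 1`, `v₁ = Sum.inr 2`,
`x₁ = Sum.inr 3`, `u₁' = Sum.inr 4`, `v₁' = Sum.inr 5` to a connected graph `H`, with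
edges `a u₁, u₁ x, x v₁, v₁ b` for distinct `a, b ∈ H`, an edge `e₀` joining `x` to a
vertex `c` of `H`, an edge `e₀'` joining `x₁` to a vertex `c'` of `H`, and edges
`a' u₁', u₁' x₁, x₁ v₁', v₁' b'` for distinct `a', b' ∈ H`.  Then
`rc(H') ≤ rc(H) + 3`. -/
theorem rc_subcase13 {V : Type*} (H : SimpleGraph V) (hH : H.Connected)
    (a b c a' b' c' : V) (hab : a ≠ b) (hab' : a' ≠ b') :
    rc (SimpleGraph.fromRel (fun u v : V ⊕ Fin 6 =>
        (∃ p q, u = Sum.inl p ∧ v = Sum.inl q ∧ H.Adj p q) ∨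
        (u = Sum.inl a ∧ v = Sum.inr 1) ∨
        (u = Sum.inr 1 ∧ v = Sum.inr 0) ∨
        (u = Sum.inr 0 ∧ v = Sum.inr 2) ∨
        (u = Sum.inr 2 ∧ v = Sum.inl b) ∨
        (u = Sum.inr 0 ∧ v = Sum.inl c) ∨
        (u = Sum.inr 3 ∧ v = Sum.inl c') ∨
        (u = Sum.inl a' ∧ v = Sum.inr 4) ∨
        (u = Sum.inr 4 ∧ v = Sum.inr 3) ∨
        (u = Sum.inr 3 ∧ v = Sum.inr 5) ∨
        (u = Sum.inr 5 ∧ v = Sum.inl b'))) ≤ rc H + 3 :=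
  rc_subcase13_general H hH a b c a' b' c'
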